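/- arXiv:2008.03486 — 2 statements merged into one kernel-verified Lean document; each statement's English description precedes it below -/
import Mathlib

section
/- Let f : [0,1] → [0,1] be continuous, surjective, and not admitting a splitting sequence, with at least two fixed points, and let d be an accumulation point of the set F of fixed points of f. Then the inverse limit Lf = {(x_n) ∈ [0,1]^ℕ : f(x_{n+1}) = x_n} decomposes as Lf = L([0,d]) ∪ L([d,1]), where L(J) = {(x_n) ∈ Lf : x_n ∈ J for all n}, and L([0,d]) ∩ L([d,1]) = {(d, d, d, …)}. -/
/-!
If an orbit `x` of the inverse limit visited both sides of `d`, say `x k < d < x i`, then,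
since fixed points accumulate at `d`, there are two fixed points `a < b` in `(x k, x i)` such
that `[a, b]` contains none of the points `x 0, …, x (max k i)`. Between `k` and `i` the orbit
must then jump over `[a, b]` in one step: `y = x (j + 1)` lies on one side of `[a, b]` and
`f y = x j` on the other. Since `[a, b] ⊆ f [a, b]`, pulling back along `f` gives a tight
sequence of subintervals of `[a, b]`, and since the interval between `y` and `[a, b]` also
covers `[a, b]`, it contains intervals with the same images, disjoint from the tight ones except
at endpoints: a splitting sequence.
-/

open Set Filter Topology

/-- `IsSplittingSeq f l r N S` : the sequence of closed proper subintervals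
`T n = Icc (l n) (r n)` of `[0,1]` is a tight sequence for `f` (i.e. `f (T (n+1)) = T n`
and `T n` is nondegenerate for all large `n`), and it is split by the nondegenerate
closed intervals `S n` for `n` in the infinite set `N`, meaning
`S n ∩ T n ⊆ {l n, r n}` and `f (S n) = f (T n)`. -/
def IsSplittingSeq (f : ℝ → ℝ) (l r : ℕ → ℝ) (N : Set ℕ) (S : ℕ → Set ℝ) : Prop :=
  (∀ n, l n ≤ r n) ∧
  (∀ n, Icc (l n) (r n) ⊆ Icc 0 1) ∧
  (∀ n, Icc (l n) (r n) ≠ Icc (0:ℝ) 1) ∧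
  (∀ n, f '' Icc (l (n+1)) (r (n+1)) = Icc (l n) (r n)) ∧
  (∃ m, ∀ n > m, l n < r n) ∧
  N.Infinite ∧
  (∀ n ∈ N, (∃ u v : ℝ, u < v ∧ S n = Icc u v) ∧ S n ⊆ Icc 0 1 ∧
    S n ∩ Icc (l n) (r n) ⊆ {l n, r n} ∧ f '' S n = f '' Icc (l n) (r n))

/-- `f` admits a splitting sequence. -/
def SplittingSeq (f : ℝ → ℝ) : Prop := ∃ l r N S, IsSplittingSeq f l r N S

/-- The paper's `L(J)`; `inverseLimit f (Icc 0 1)` is the inverse limit `L_f` itself. -/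
def inverseLimit (f : ℝ → ℝ) (J : Set ℝ) : Set (ℕ → ℝ) :=
  {x | (∀ n, x n ∈ J) ∧ ∀ n, f (x (n + 1)) = x n}

lemma inverseLimit_mono {f : ℝ → ℝ} {J K : Set ℝ} (hJK : J ⊆ K) :
    inverseLimit f J ⊆ inverseLimit f K :=
  fun _ hx => ⟨fun n => hJK (hx.1 n), hx.2⟩

lemma inverseLimit_Icc_inter_Icc {f : ℝ → ℝ} {a b d : ℝ} (hfd : f d = d) (had : a ≤ d)
    (hdb : d ≤ b) : inverseLimit f (Icc a d) ∩ inverseLimit f (Icc d b) = {fun _ => d} := by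
  refine Subset.antisymm ?_ ?_
  · rintro x ⟨⟨hxa, -⟩, ⟨hxb, -⟩⟩
    exact funext fun n => le_antisymm (hxa n).2 (hxb n).1
  · rintro _ rfl
    exact ⟨⟨fun _ => ⟨had, le_rfl⟩, fun _ => hfd⟩, ⟨fun _ => ⟨le_rfl, hdb⟩, fun _ => hfd⟩⟩

lemma mem_uIcc_or_mem_uIcc_of_notMem_uIcc {α : Type*} [LinearOrder α] {a b c : α}
    (h : c ∉ uIcc a b) : b ∈ uIcc a c ∨ a ∈ uIcc c b := by
  simp only [mem_uIcc] at *
  rcases le_total a b with hab | hab <;> rcases le_total c a with hca | hca <;> grind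

/-- Take `v` the first preimage of `f q` in `[p, q]` and `u` the last preimage of `f p` in
`[p, v]`: a value of `f` on `[u, v]` outside `uIcc (f p) (f q)` would, by the intermediate value
theorem, produce a preimage of `f q` before `v` or one of `f p` after `u`. -/
lemma ContinuousOn.exists_image_Icc_eq_uIcc {f : ℝ → ℝ} {p q : ℝ}
    (hf : ContinuousOn f (Icc p q)) (hpq : p ≤ q) :
    ∃ u v, p ≤ u ∧ u ≤ v ∧ v ≤ q ∧ f '' Icc u v = uIcc (f p) (f q) := by
  set B := Icc p q ∩ f ⁻¹' {f q}
  have hBbdd : BddBelow B := ⟨p, fun t ht => ht.1.1⟩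
  have hv : sInf B ∈ B :=
    (hf.preimage_isClosed_of_isClosed isClosed_Icc isClosed_singleton).csInf_mem
      ⟨q, right_mem_Icc.2 hpq, rfl⟩ hBbdd
  set v := sInf B
  set A := Icc p v ∩ f ⁻¹' {f p}
  have hAbdd : BddAbove A := ⟨v, fun t ht => ht.1.2⟩
  have hu : sSup A ∈ A := ((hf.mono (Icc_subset_Icc_right hv.1.2)).preimage_isClosed_of_isClosed
    isClosed_Icc isClosed_singleton).csSup_mem ⟨p, left_mem_Icc.2 hv.1.1, rfl⟩ hAbdd
  set u := sSup A
  have hfu : f u = f p := hu.2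
  have hfv : f v = f q := hv.2
  have hcont : ContinuousOn f (Icc u v) := hf.mono (Icc_subset_Icc hu.1.1 hv.1.2)
  refine ⟨u, v, hu.1.1, hu.1.2, hv.1.2, Subset.antisymm ?_ ?_⟩
  · rintro _ ⟨t, ht, rfl⟩
    by_contra hout
    rw [← hfu, ← hfv] at hout
    rcases mem_uIcc_or_mem_uIcc_of_notMem_uIcc hout with hβ | hα
    · obtain ⟨s, hs, hfs⟩ := intermediate_value_uIcc
        (hcont.mono (by rw [uIcc_of_le ht.1]; exact Icc_subset_Icc_right ht.2)) hβ
      rw [uIcc_of_le ht.1] at hs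
      have hvs : v ≤ s := csInf_le hBbdd
        ⟨⟨hu.1.1.trans hs.1, hs.2.trans (ht.2.trans hv.1.2)⟩, hfs.trans hfv⟩
      exact hout (le_antisymm ht.2 (hvs.trans hs.2) ▸ right_mem_uIcc)
    · obtain ⟨s, hs, hfs⟩ := intermediate_value_uIcc
        (hcont.mono (by rw [uIcc_of_le ht.2]; exact Icc_subset_Icc_left ht.1)) hα
      rw [uIcc_of_le ht.2] at hs
      have hsu : s ≤ u := le_csSup hAbdd
        ⟨⟨hu.1.1.trans (ht.1.trans hs.1), hs.2⟩, hfs.trans hfu⟩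
      exact hout (le_antisymm (hs.1.trans hsu) ht.1 ▸ left_mem_uIcc)
  · rw [← hfu, ← hfv, ← uIcc_of_le hu.1.2]
    exact intermediate_value_uIcc (by rwa [uIcc_of_le hu.1.2])

lemma ContinuousOn.exists_image_Icc_eq_of_Icc_subset_image {f : ℝ → ℝ} {a b k₁ k₂ : ℝ}
    (hf : ContinuousOn f (Icc a b)) (hk : k₁ ≤ k₂) (hK : Icc k₁ k₂ ⊆ f '' Icc a b) :
    ∃ u v, a ≤ u ∧ u ≤ v ∧ v ≤ b ∧ f '' Icc u v = Icc k₁ k₂ := by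
  obtain ⟨p, hp, hfp⟩ := hK (left_mem_Icc.2 hk)
  obtain ⟨q, hq, hfq⟩ := hK (right_mem_Icc.2 hk)
  rcases le_total p q with hpq | hqp
  · obtain ⟨u, v, hpu, huv, hvq, himg⟩ :=
      (hf.mono (Icc_subset_Icc hp.1 hq.2)).exists_image_Icc_eq_uIcc hpq
    rw [hfp, hfq, uIcc_of_le hk] at himg
    exact ⟨u, v, hp.1.trans hpu, huv, hvq.trans hq.2, himg⟩
  · obtain ⟨u, v, hqu, huv, hvp, himg⟩ :=
      (hf.mono (Icc_subset_Icc hq.1 hp.2)).exists_image_Icc_eq_uIcc hqp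
    rw [hfp, hfq, uIcc_of_ge hk] at himg
    exact ⟨u, v, hq.1.trans hqu, huv, hvp.trans hp.2, himg⟩

lemma lt_of_image_Icc_eq_Icc {f : ℝ → ℝ} {u v l r : ℝ} (h : f '' Icc u v = Icc l r)
    (hlr : l < r) : u < v := by
  obtain ⟨s, hs, hfs⟩ := h.symm ▸ left_mem_Icc.2 hlr.le
  obtain ⟨t, ht, hft⟩ := h.symm ▸ right_mem_Icc.2 hlr.le
  by_contra! hvu
  have hst : s = t := by linarith [hs.1, hs.2, ht.1, ht.2]
  exact hlr.ne (hfs ▸ hft ▸ congrArg f hst)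

lemma exists_tight_seq_of_Icc_subset_image {f : ℝ → ℝ} {c c' : ℝ}
    (hf : ContinuousOn f (Icc c c')) (hcc : c < c') (hinv : Icc c c' ⊆ f '' Icc c c') :
    ∃ l r : ℕ → ℝ, (∀ n, c ≤ l n ∧ l n < r n ∧ r n ≤ c') ∧
      ∀ n, f '' Icc (l (n + 1)) (r (n + 1)) = Icc (l n) (r n) := by
  let P : ℝ × ℝ → Prop := fun J => c ≤ J.1 ∧ J.1 < J.2 ∧ J.2 ≤ c'
  have step : ∀ J : {J // P J}, ∃ J' : {J // P J}, f '' Icc J'.1.1 J'.1.2 = Icc J.1.1 J.1.2 := by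
    rintro ⟨⟨l, r⟩, hl, hlr, hr⟩
    obtain ⟨u, v, hu, -, hv, himg⟩ :=
      hf.exists_image_Icc_eq_of_Icc_subset_image hlr.le ((Icc_subset_Icc hl hr).trans hinv)
    exact ⟨⟨(u, v), hu, lt_of_image_Icc_eq_Icc himg hlr, hv⟩, himg⟩
  choose g hg using step
  let J : ℕ → {J // P J} := fun n => g^[n] ⟨(c, c'), le_rfl, hcc, le_rfl⟩
  refine ⟨fun n => (J n).1.1, fun n => (J n).1.2, fun n => (J n).2, fun n => ?_⟩
  simp only [J, Function.iterate_succ_apply']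
  exact hg _

lemma splittingSeq_of_Icc_subset_image {f : ℝ → ℝ} {c c' p q : ℝ}
    (hf : ContinuousOn f (Icc 0 1)) (hcc : c < c') (hsub : Icc c c' ⊂ Icc 0 1)
    (hinv : Icc c c' ⊆ f '' Icc c c') (hpq : Icc p q ⊆ Icc 0 1)
    (hmeet : Icc p q ∩ Icc c c' ⊆ {c, c'}) (hcover : Icc c c' ⊆ f '' Icc p q) :
    SplittingSeq f := by
  obtain ⟨l, r, hlr, himg⟩ := exists_tight_seq_of_Icc_subset_image (hf.mono hsub.subset) hcc hinv
  have hT : ∀ n, Icc (l n) (r n) ⊆ Icc c c' := fun n => Icc_subset_Icc (hlr n).1 (hlr n).2.2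
  have hS : ∀ n, ∃ u v, p ≤ u ∧ u ≤ v ∧ v ≤ q ∧ f '' Icc u v = Icc (l n) (r n) := fun n =>
    (hf.mono hpq).exists_image_Icc_eq_of_Icc_subset_image (hlr n).2.1.le ((hT n).trans hcover)
  choose u v hpu _ hvq hSimg using hS
  refine ⟨l, r, Ici 1, fun n => Icc (u (n - 1)) (v (n - 1)), fun n => (hlr n).2.1.le,
    fun n => (hT n).trans hsub.subset, fun n h => hsub.not_superset (h ▸ hT n), himg,
    ⟨0, fun n _ => (hlr n).2.1⟩, Ici_infinite 1, ?_⟩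
  intro n (hn : 1 ≤ n)
  obtain ⟨m, rfl⟩ : ∃ m, n = m + 1 := ⟨n - 1, by omega⟩
  simp only [Nat.add_sub_cancel]
  refine ⟨⟨u m, v m, lt_of_image_Icc_eq_Icc (hSimg m) (hlr m).2.1, rfl⟩,
    (Icc_subset_Icc (hpu m) (hvq m)).trans hpq, ?_, by rw [hSimg, himg]⟩
  rintro t ⟨htS, htT⟩
  rcases hmeet ⟨Icc_subset_Icc (hpu m) (hvq m) htS, hT _ htT⟩ with rfl | rfl
  · exact Or.inl (le_antisymm (hlr _).1 htT.1)
  · exact Or.inr (le_antisymm htT.2 (hlr _).2.2)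

lemma splittingSeq_of_jump_over {f : ℝ → ℝ} {c c' y : ℝ} (hf : ContinuousOn f (Icc 0 1))
    (hcc : c < c') (hsub : Icc c c' ⊂ Icc 0 1) (hfc : f c = c) (hfc' : f c' = c')
    (hy : y ∈ Icc 0 1) (hjump : (y < c ∧ c' < f y) ∨ (c' < y ∧ f y < c)) : SplittingSeq f := by
  have hcc01 : Icc c c' ⊆ Icc 0 1 := hsub.subset
  have hinv : Icc c c' ⊆ f '' Icc c c' := by
    simpa only [hfc, hfc'] using intermediate_value_Icc hcc.le (hf.mono hcc01)
  rcases hjump with ⟨hyc, hcy⟩ | ⟨hcy, hyc⟩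
  · have hyc01 : Icc y c ⊆ Icc 0 1 := Icc_subset_Icc hy.1 (hcc01 ⟨le_rfl, hcc.le⟩).2
    refine splittingSeq_of_Icc_subset_image hf hcc hsub hinv hyc01 ?_ ?_
    · rintro t ⟨ht, ht'⟩
      exact Or.inl (le_antisymm ht.2 ht'.1)
    · refine (Icc_subset_Icc hfc.le hcy.le).trans ?_
      exact intermediate_value_Icc' hyc.le (hf.mono hyc01)
  · have hcy01 : Icc c' y ⊆ Icc 0 1 := Icc_subset_Icc (hcc01 ⟨hcc.le, le_rfl⟩).1 hy.2
    refine splittingSeq_of_Icc_subset_image hf hcc hsub hinv hcy01 ?_ ?_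
    · rintro t ⟨ht, ht'⟩
      exact Or.inr (le_antisymm ht'.2 ht.1)
    · refine (Icc_subset_Icc hyc.le hfc'.ge).trans ?_
      exact intermediate_value_Icc' hcy.le (hf.mono hcy01)

lemma Set.Infinite.exists_lt_forall_notMem_Icc {α : Type*} [LinearOrder α] {s : Set α}
    (hs : s.Infinite) (V : Finset α) : ∃ a ∈ s, ∃ b ∈ s, a < b ∧ ∀ v ∈ V, v ∉ Icc a b := by
  classical
  -- two points of `s \ V` with equally many points of `V` below them have none in between
  let below : α → ℕ := fun w => (V.filter (· < w)).card
  have hmaps : MapsTo below (s \ V) (Iic V.card) := fun _ _ => Finset.card_filter_le _ _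
  obtain ⟨a, ha, b, hb, hne, hab⟩ :=
    (hs.sdiff V.finite_toSet).exists_ne_map_eq_of_mapsTo hmaps (finite_Iic _)
  wlog hlt : a < b generalizing a b
  · exact this b hb a ha hne.symm hab.symm (hne.lt_or_gt.resolve_left hlt)
  refine ⟨a, ha.1, b, hb.1, hlt, fun v hv hvab => ?_⟩
  have hav : a < v := hvab.1.lt_of_ne fun h => ha.2 (h ▸ hv)
  have hvb : v < b := hvab.2.lt_of_ne fun h => hb.2 (h ▸ hv)
  have hsub : V.filter (· < a) ⊂ V.filter (· < b) :=
    (Finset.ssubset_iff_of_subset fun w hw => Finset.mem_filter.2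
      ⟨(Finset.mem_filter.1 hw).1, (Finset.mem_filter.1 hw).2.trans hlt⟩).2
      ⟨v, Finset.mem_filter.2 ⟨hv, hvb⟩, fun h => (Finset.mem_filter.1 h).2.not_gt hav⟩
  exact (Finset.card_lt_card hsub).ne hab

lemma exists_lt_max_not_iff_succ (P : ℕ → Prop) {m n : ℕ} (h : ¬(P m ↔ P n)) :
    ∃ j < max m n, ¬(P j ↔ P (j + 1)) := by
  by_contra! hcon
  have hconst : ∀ t ≤ max m n, (P t ↔ P 0) := by
    intro t
    induction t with
    | zero => exact fun _ => Iff.rfl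
    | succ t ih => exact fun ht => (hcon t ht).symm.trans (ih (Nat.le_of_succ_le ht))
  exact h ((hconst m (le_max_left m n)).trans (hconst n (le_max_right m n)).symm)

lemma splittingSeq_of_orbit_crosses {f : ℝ → ℝ} (hf : ContinuousOn f (Icc 0 1)) {d : ℝ}
    (hacc : d ∈ closure ({x ∈ Icc (0:ℝ) 1 | f x = x} \ {d})) {x : ℕ → ℝ}
    (hx : x ∈ inverseLimit f (Icc 0 1)) {k i : ℕ} (hk : x k < d) (hi : d < x i) :
    SplittingSeq f := by
  have hinf : (Ioo (x k) (x i) ∩ {x ∈ Icc (0:ℝ) 1 | f x = x}).Infinite :=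
    Set.Infinite.of_accPt <| (accPt_principal_iff_clusterPt.2
      (mem_closure_iff_clusterPt.1 hacc)).nhds_inter (Ioo_mem_nhds hk hi)
  obtain ⟨a, ⟨⟨hka, -⟩, -, hfa⟩, b, ⟨⟨-, hbi⟩, -, hfb⟩, hab, hgap⟩ :=
    hinf.exists_lt_forall_notMem_Icc ((Finset.range (max k i + 1)).image x)
  have hside : ∀ n ≤ max k i, x n < a ∨ b < x n := fun n hn => by
    have := hgap (x n) (Finset.mem_image_of_mem x (Finset.mem_range.2 (Nat.lt_succ_of_le hn)))
    simpa only [mem_Icc, not_and_or, not_le] using this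
  obtain ⟨j, hj, hflip⟩ := exists_lt_max_not_iff_succ (fun n => b < x n) (m := k) (n := i)
    fun h => (hka.trans hab).not_gt (h.2 hbi)
  refine splittingSeq_of_jump_over hf hab
    (Icc_ssubset_Icc_left zero_le_one ((hx.1 k).1.trans_lt hka) (hbi.le.trans (hx.1 i).2))
    hfa hfb (hx.1 (j + 1)) ?_
  rw [hx.2 j]
  rcases hside j hj.le with hj₀ | hj₀ <;> rcases hside (j + 1) hj with hj₁ | hj₁
  · exact absurd (iff_of_false (hj₀.trans hab).not_gt (hj₁.trans hab).not_gt) hflip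
  · exact Or.inr ⟨hj₁, hj₀⟩
  · exact Or.inl ⟨hj₁, hj₀⟩
  · exact absurd (iff_of_true hj₀ hj₁) hflip

lemma inverseLimit_eq_union_of_not_splittingSeq {f : ℝ → ℝ} (hf : ContinuousOn f (Icc 0 1))
    (hns : ¬ SplittingSeq f) {d : ℝ} (hd : d ∈ Icc (0:ℝ) 1)
    (hacc : d ∈ closure ({x ∈ Icc (0:ℝ) 1 | f x = x} \ {d})) :
    inverseLimit f (Icc 0 1) = inverseLimit f (Icc 0 d) ∪ inverseLimit f (Icc d 1) := by
  refine Subset.antisymm (fun x hx => ?_) (union_subset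
    (inverseLimit_mono (Icc_subset_Icc_right hd.2)) (inverseLimit_mono (Icc_subset_Icc_left hd.1)))
  by_contra hx'
  obtain ⟨i, hi⟩ : ∃ i, d < x i := by
    by_contra! h
    exact hx' (Or.inl ⟨fun n => ⟨(hx.1 n).1, h n⟩, hx.2⟩)
  obtain ⟨k, hk⟩ : ∃ k, x k < d := by
    by_contra! h
    exact hx' (Or.inr ⟨fun n => ⟨h n, (hx.1 n).2⟩, hx.2⟩)
  exact hns (splittingSeq_of_orbit_crosses hf hacc hx hk hi)

theorem stmt_18_general (f : ℝ → ℝ) (hf : ContinuousOn f (Icc 0 1))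
    (hns : ¬ SplittingSeq f)
    (d : ℝ) (hd : d ∈ Icc (0:ℝ) 1)
    (hacc : d ∈ closure ({x ∈ Icc (0:ℝ) 1 | f x = x} \ {d})) :
    ({x : ℕ → ℝ | (∀ n, x n ∈ Icc (0:ℝ) 1) ∧ ∀ n, f (x (n+1)) = x n} =
        {x : ℕ → ℝ | (∀ n, x n ∈ Icc 0 d) ∧ ∀ n, f (x (n+1)) = x n} ∪
        {x : ℕ → ℝ | (∀ n, x n ∈ Icc d 1) ∧ ∀ n, f (x (n+1)) = x n}) ∧
    ({x : ℕ → ℝ | (∀ n, x n ∈ Icc 0 d) ∧ ∀ n, f (x (n+1)) = x n} ∩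
        {x : ℕ → ℝ | (∀ n, x n ∈ Icc d 1) ∧ ∀ n, f (x (n+1)) = x n} =
      {fun _ => d}) := by
  have hfd : f d = d :=
    (closure_minimal sdiff_subset (isClosed_Icc.isClosed_eq hf continuousOn_id) hacc).2
  exact ⟨inverseLimit_eq_union_of_not_splittingSeq hf hns hd hacc,
    inverseLimit_Icc_inter_Icc hfd hd.1 hd.2⟩

theorem stmt_18 (f : ℝ → ℝ) (hf : ContinuousOn f (Icc 0 1))
    (hsurj : f '' Icc 0 1 = Icc 0 1) (hns : ¬ SplittingSeq f)
    (htwo : ∃ x ∈ Icc (0:ℝ) 1, ∃ y ∈ Icc (0:ℝ) 1, x ≠ y ∧ f x = x ∧ f y = y)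
    (d : ℝ) (hd : d ∈ Icc (0:ℝ) 1)
    (hacc : d ∈ closure ({x ∈ Icc (0:ℝ) 1 | f x = x} \ {d})) :
    ({x : ℕ → ℝ | (∀ n, x n ∈ Icc (0:ℝ) 1) ∧ ∀ n, f (x (n+1)) = x n} =
        {x : ℕ → ℝ | (∀ n, x n ∈ Icc 0 d) ∧ ∀ n, f (x (n+1)) = x n} ∪
        {x : ℕ → ℝ | (∀ n, x n ∈ Icc d 1) ∧ ∀ n, f (x (n+1)) = x n}) ∧
    ({x : ℕ → ℝ | (∀ n, x n ∈ Icc 0 d) ∧ ∀ n, f (x (n+1)) = x n} ∩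
        {x : ℕ → ℝ | (∀ n, x n ∈ Icc d 1) ∧ ∀ n, f (x (n+1)) = x n} =
      {fun _ => d}) :=
  stmt_18_general f hf hns d hd hacc
end

section
/- Let f : [0,1] → [0,1] be continuous and surjective. If f admits a splitting sequence, then there is a nondegenerate subcontinuum C of the inverse limit Lf and a sequence of nondegenerate subcontinua C_n ⊆ Lf with C_n ≠ C for all n, such that C_n → C in the Hausdorff metric. In particular, Lf is not an arc. -/
open Set Filter Topology

/-- The inverse limit of `f : [0,1] → [0,1]`, as a set of sequences. -/
def invLimit (f : ℝ → ℝ) : Set (ℕ → ℝ) :=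
  {x | (∀ n, x n ∈ Icc (0:ℝ) 1) ∧ ∀ n, f (x (n+1)) = x n}

/-- Hausdorff distance on subsets of `ℕ → ℝ`, using the (non-canonical but
topologically correct) product metric of `PiCountable.metricSpace`. -/
noncomputable def seqHausdorffDist (A B : Set (ℕ → ℝ)) : ℝ :=
  @Metric.hausdorffDist (ℕ → ℝ)
    (@MetricSpace.toPseudoMetricSpace _ (PiCountable.metricSpace)) A B

/-!
Extend `f` to a continuous `g : ℝ → ℝ`. For intervals `T k` with `g (T (k+1)) = T k`, the
threads `x` with `x k ∈ T k` form a subcontinuum `C` of the inverse limit (a nested intersection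
of continua). Given `j`, pick a splitting index `n + 1 > j`: the threads that follow `T k` up to
level `n` and then pass through `S (n+1)` (continued upwards by lifting intervals with the
intermediate value theorem) form a subcontinuum `C_j ≠ C` with the same first `n + 1`
coordinates as `C`, so `C_j → C` in the Hausdorff metric. As `S (n+1)` meets `T (n+1)` only in
endpoints, the coordinate `n + 1` takes at most two values on `C ∩ C_j`.

If the inverse limit were an arc, `C` would be a subarc and, approximating its two endpoints by
points of `C_j`, some fixed nondegenerate subarc `M ⊆ C` would lie in `C_j` for all large `j`.
Then every coordinate is constant on the connected set `M`, so `M` is a point.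
-/

theorem isConnected_iInter_of_antitone {X : Type*} [TopologicalSpace X] [T2Space X]
    {K : ℕ → Set X} (hK : Antitone K) (hc : ∀ n, IsCompact (K n))
    (hconn : ∀ n, IsConnected (K n)) : IsConnected (⋂ n, K n) := by
  have hclosed n : IsClosed (K n) := (hc n).isClosed
  refine ⟨IsCompact.nonempty_iInter_of_sequence_nonempty_isCompact_isClosed K
    (fun n => hK n.le_succ) (fun n => (hconn n).nonempty) (hc 0) hclosed, ?_⟩
  rw [isPreconnected_iff_subset_of_fully_disjoint_closed (isClosed_iInter hclosed)]
  intro u v hu hv huv hdisj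
  have hL : IsCompact (⋂ n, K n) := (hc 0).of_isClosed_subset (isClosed_iInter hclosed)
    (iInter_subset _ 0)
  obtain ⟨U, V, hU, hV, hLU, hLV, hUV⟩ := SeparatedNhds.of_isCompact_isCompact
    (hL.inter_right hu) (hL.inter_right hv) (hdisj.mono inter_subset_right inter_subset_right)
  have hLUV : ⋂ n, K n ⊆ U ∪ V := fun x hx =>
    (huv hx).imp (fun h => hLU ⟨hx, h⟩) (fun h => hLV ⟨hx, h⟩)
  obtain ⟨n, hn⟩ := exists_subset_nhds_of_isCompact hK.directed_ge hc fun x hx =>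
    (hU.union hV).mem_nhds (hLUV hx)
  -- a connected `K n` lies on one side of the separation, and so does the intersection
  rcases (hconn n).isPreconnected.subset_or_subset hU hV hUV hn with h | h
  · refine Or.inl fun x hx => (huv hx).resolve_right fun hxv => ?_
    exact hUV.ne_of_mem (h (iInter_subset _ n hx)) (hLV ⟨hx, hxv⟩) rfl
  · refine Or.inr fun x hx => (huv hx).resolve_left fun hxu => ?_
    exact hUV.ne_of_mem (hLU ⟨hx, hxu⟩) (h (iInter_subset _ n hx)) rfl

section Threads

variable {α : Type*} {g : α → α}

theorem iterate_sub_apply_eq_of_forall_lt {x : ℕ → α} {n k : ℕ}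
    (h : ∀ i < n, g (x (i + 1)) = x i) (hk : k ≤ n) : g^[n - k] (x n) = x k := by
  obtain ⟨d, rfl⟩ := Nat.exists_eq_add_of_le hk
  rw [Nat.add_sub_cancel_left]
  induction d with
  | zero => rfl
  | succ d ih =>
    rw [Function.iterate_succ_apply, ← add_assoc, h _ (by omega)]
    exact ih (fun i hi => h i (by omega)) (by omega)

theorem mapsTo_iterate_of_forall_mapsTo {s : ℕ → Set α} (h : ∀ k, MapsTo g (s (k + 1)) (s k))
    (k d : ℕ) : MapsTo g^[d] (s (k + d)) (s k) := by
  induction d with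
  | zero => exact mapsTo_id _
  | succ d ih => rw [Function.iterate_succ]; exact ih.comp (h (k + d))

def threads (g : α → α) (s : ℕ → Set α) : Set (ℕ → α) :=
  {x | (∀ k, x k ∈ s k) ∧ ∀ k, g (x (k + 1)) = x k}

theorem exists_mem_threads_apply_eq {s : ℕ → Set α} (hs : ∀ k, g '' s (k + 1) = s k) {j : ℕ}
    {t : α} (ht : t ∈ s j) : ∃ x ∈ threads g s, x j = t := by
  choose! L hL using fun k y (hy : y ∈ s k) => ((hs k).symm ▸ hy : y ∈ g '' s (k + 1))
  let up : ℕ → α := fun i => Nat.rec t (fun i y => L (j + i) y) i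
  have hup : ∀ i, up i ∈ s (j + i) := fun i => by
    induction i with
    | zero => exact ht
    | succ i ih => exact (hL _ _ ih).1
  have hmaps k : MapsTo g (s (k + 1)) (s k) := (hs k) ▸ mapsTo_image g _
  -- with truncated subtraction this is `g^[j - k] t` below level `j` and `up (k - j)` above it
  refine ⟨fun k => g^[j - k] (up (k - j)), ⟨fun k => ?_, fun k => ?_⟩, by simp [up]⟩
  · refine mapsTo_iterate_of_forall_mapsTo hmaps k (j - k) ?_
    rw [show k + (j - k) = j + (k - j) by omega]
    exact hup _
  · show g (g^[j - (k + 1)] (up (k + 1 - j))) = g^[j - k] (up (k - j))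
    rcases lt_or_ge k j with hk | hk
    · rw [show j - k = j - (k + 1) + 1 by omega, show k + 1 - j = k - j by omega,
        Function.iterate_succ_apply']
    · rw [show j - (k + 1) = j - k by omega, show j - k = 0 by omega,
        show k + 1 - j = k - j + 1 by omega, Function.iterate_zero_apply]
      exact (hL _ _ (hup _)).2

theorem image_apply_threads {s : ℕ → Set α} (hs : ∀ k, g '' s (k + 1) = s k) (j : ℕ) :
    (fun x => x j) '' threads g s = s j :=
  Subset.antisymm (image_subset_iff.2 fun _ hx => hx.1 j) fun _ ht =>
    (exists_mem_threads_apply_eq hs ht).imp fun _ => id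

theorem exists_mem_threads_forall_le_eq {s s' : ℕ → Set α} (hs' : ∀ k, g '' s' (k + 1) = s' k)
    {x : ℕ → α} (hx : x ∈ threads g s) {n : ℕ} (hn : x n ∈ s' n) :
    ∃ y ∈ threads g s', ∀ k ≤ n, y k = x k := by
  obtain ⟨y, hy, hyn⟩ := exists_mem_threads_apply_eq hs' hn
  refine ⟨y, hy, fun k hk => ?_⟩
  rw [← iterate_sub_apply_eq_of_forall_lt (fun i _ => hy.2 i) hk,
    ← iterate_sub_apply_eq_of_forall_lt (fun i _ => hx.2 i) hk, hyn]

theorem Set.Subsingleton.of_frequently_subsingleton_image_apply {M : Set (ℕ → α)}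
    (hM : ∀ x ∈ M, ∀ k, g (x (k + 1)) = x k)
    (hfreq : ∀ k, ∃ n ≥ k, ((fun x => x n) '' M).Subsingleton) : M.Subsingleton := by
  intro x hx y hy
  funext k
  obtain ⟨n, hkn, hn⟩ := hfreq k
  rw [← iterate_sub_apply_eq_of_forall_lt (fun i _ => hM x hx i) hkn,
    ← iterate_sub_apply_eq_of_forall_lt (fun i _ => hM y hy i) hkn]
  exact congrArg _ (hn ⟨x, hx, rfl⟩ ⟨y, hy, rfl⟩)

variable [TopologicalSpace α] [T2Space α]

theorem isCompact_threads (hg : Continuous g) {s : ℕ → Set α} (hs : ∀ k, IsCompact (s k)) :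
    IsCompact (threads g s) := by
  have : threads g s = univ.pi s ∩ ⋂ k, {x | g (x (k + 1)) = x k} := by
    ext x; simp [threads]
  rw [this]
  exact (isCompact_univ_pi hs).inter_right <| isClosed_iInter fun k =>
    isClosed_eq (hg.comp (continuous_apply _)) (continuous_apply _)

theorem isConnected_threads (hg : Continuous g) {s : ℕ → Set α} (hsc : ∀ k, IsCompact (s k))
    (hs : ∀ k, IsConnected (s k)) (himg : ∀ k, g '' s (k + 1) = s k) :
    IsConnected (threads g s) := by
  have hmaps k : MapsTo g (s (k + 1)) (s k) := (himg k) ▸ mapsTo_image g _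
  -- `Q n` only asks for the first `n` bonding relations; it is the image of `univ.pi s` under
  -- the continuous map `trunc n` which recomputes the coordinates below `n` from the `n`-th one
  let Q (n : ℕ) : Set (ℕ → α) := {x | (∀ k, x k ∈ s k) ∧ ∀ k < n, g (x (k + 1)) = x k}
  let trunc (n : ℕ) (x : ℕ → α) (k : ℕ) : α := if k ≤ n then g^[n - k] (x n) else x k
  have htrunc n : Continuous (trunc n) := continuous_pi fun k => by
    by_cases hk : k ≤ n
    · simp only [trunc, if_pos hk]; exact (hg.iterate _).comp (continuous_apply n)
    · simp only [trunc, if_neg hk]; exact continuous_apply k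
  have hQ n : trunc n '' univ.pi s = Q n := by
    refine Subset.antisymm ?_ fun x hx => ⟨x, fun k _ => hx.1 k, funext fun k => ?_⟩
    · rintro _ ⟨x, hx, rfl⟩
      rw [mem_univ_pi] at hx
      refine ⟨fun k => ?_, fun k hk => ?_⟩
      · by_cases hkn : k ≤ n
        · simp only [trunc, if_pos hkn]
          refine mapsTo_iterate_of_forall_mapsTo hmaps k (n - k) ?_
          rw [Nat.add_sub_cancel' hkn]
          exact hx n
        · simp only [trunc, if_neg hkn]; exact hx k
      · simp only [trunc, if_pos hk.le, if_pos (Nat.succ_le_of_lt hk)]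
        rw [← Function.iterate_succ_apply' g, show (n - (k + 1)).succ = n - k by omega]
    · by_cases hkn : k ≤ n
      · simp only [trunc, if_pos hkn, iterate_sub_apply_eq_of_forall_lt hx.2 hkn]
      · simp only [trunc, if_neg hkn]
  have hiInter : threads g s = ⋂ n, Q n := by
    ext x
    simp only [threads, Q, mem_iInter, mem_ofPred_eq]
    exact ⟨fun h n => ⟨h.1, fun k _ => h.2 k⟩,
      fun h => ⟨(h 0).1, fun k => (h (k + 1)).2 k k.lt_succ_self⟩⟩
  rw [hiInter]
  refine isConnected_iInter_of_antitone
    (fun m n hmn x hx => ⟨hx.1, fun k hk => hx.2 k (hk.trans_le hmn)⟩) (fun n => ?_) (fun n => ?_)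
  · rw [← hQ n]; exact (isCompact_univ_pi hsc).image (htrunc n)
  · rw [← hQ n]; exact (isConnected_univ_pi.2 hs).image _ (htrunc n).continuousOn

end Threads

theorem tendsto_pi_of_forall_le_eq {E : ℕ → Type*} [∀ k, TopologicalSpace (E k)]
    {w : ℕ → ∀ k, E k} {z : ∀ k, E k} (h : ∀ j, ∀ k ≤ j, w j k = z k) :
    Tendsto w atTop (𝓝 z) :=
  tendsto_pi_nhds.2 fun k => tendsto_const_nhds.congr' <|
    (eventually_ge_atTop k).mono fun j hj => (h j k hj).symm

section ProductMetric

attribute [local instance] PiCountable.metricSpace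

theorem dist_le_of_forall_le_eq {x y : ℕ → ℝ} {n : ℕ} (h : ∀ k ≤ n, x k = y k) :
    dist x y ≤ 2⁻¹ ^ n := by
  have hgeom : Summable fun i : ℕ => (2⁻¹ : ℝ) ^ i :=
    summable_geometric_of_lt_one (by norm_num) (by norm_num)
  calc dist x y = ∑' i : ℕ, min (2⁻¹ ^ i) (dist (x i) (y i)) := by
        simp [PiCountable.dist_eq_tsum]
    _ ≤ ∑' i : ℕ, if n + 1 ≤ i then (2⁻¹ : ℝ) ^ i else 0 := by
        refine (PiCountable.dist_summable x y).tsum_le_tsum (fun i => ?_)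
          (hgeom.of_nonneg_of_le (fun i => by positivity) fun i => ?_)
        · split_ifs with hi
          · simp
          · simp [h i (by omega)]
        · split_ifs <;> simp
    _ = 2⁻¹ ^ n := by rw [tsum_geometric_inv_two_ge]; ring

theorem seqHausdorffDist_le_of_forall_le_eq {A B : Set (ℕ → ℝ)} {n : ℕ}
    (hAB : ∀ x ∈ A, ∃ y ∈ B, ∀ k ≤ n, y k = x k) (hBA : ∀ y ∈ B, ∃ x ∈ A, ∀ k ≤ n, x k = y k) :
    seqHausdorffDist A B ≤ 2⁻¹ ^ n :=
  Metric.hausdorffDist_le_of_mem_dist (by positivity)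
    (fun x hx => (hAB x hx).imp fun _ ⟨hy, h⟩ =>
      ⟨hy, dist_le_of_forall_le_eq fun k hk => (h k hk).symm⟩)
    (fun y hy => (hBA y hy).imp fun _ ⟨hx, h⟩ =>
      ⟨hx, dist_le_of_forall_le_eq fun k hk => (h k hk).symm⟩)

theorem tendsto_seqHausdorffDist_of_forall_le_eq {A : ℕ → Set (ℕ → ℝ)} {B : Set (ℕ → ℝ)}
    (hAB : ∀ j, ∀ x ∈ A j, ∃ y ∈ B, ∀ k ≤ j, y k = x k)
    (hBA : ∀ j, ∀ y ∈ B, ∃ x ∈ A j, ∀ k ≤ j, x k = y k) :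
    Tendsto (fun j => seqHausdorffDist (A j) B) atTop (𝓝 0) :=
  squeeze_zero (fun _ => Metric.hausdorffDist_nonneg)
    (fun j => seqHausdorffDist_le_of_forall_le_eq (hAB j) (hBA j))
    (tendsto_pow_atTop_nhds_zero_of_lt_one (by norm_num) (by norm_num))

end ProductMetric

section IntervalLifting

variable {g : ℝ → ℝ}

theorem IsPreconnected.subsingleton_of_finite {s : Set ℝ} (hs : IsPreconnected s)
    (hfin : s.Finite) : s.Subsingleton := by
  intro x hx y hy
  by_contra hxy
  rcases lt_or_gt_of_ne hxy with h | h
  · exact (Icc_infinite h).mono (hs.Icc_subset hx hy) hfin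
  · exact (Icc_infinite h).mono (hs.Icc_subset hy hx) hfin

theorem exists_Icc_image_eq_Icc_of_le (hg : Continuous g) {p q u v : ℝ} (hpq : p ≤ q)
    (hp : g p = u) (hq : g q = v) (huv : u ≤ v) :
    ∃ a b, p ≤ a ∧ a ≤ b ∧ b ≤ q ∧ g '' Icc a b = Icc u v := by
  -- `b` is the first point of `[p, q]` where `g = v`, `a` the last point of `[p, b]` where `g = u`
  set B := Icc p q ∩ g ⁻¹' {v}
  have hBb : BddBelow B := bddBelow_Icc.mono inter_subset_left
  have hbB : sInf B ∈ B := (isClosed_Icc.inter (isClosed_singleton.preimage hg)).csInf_mem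
    ⟨q, ⟨hpq, le_rfl⟩, hq⟩ hBb
  set b := sInf B
  set A := Icc p b ∩ g ⁻¹' {u}
  have hAb : BddAbove A := bddAbove_Icc.mono inter_subset_left
  have haA : sSup A ∈ A := (isClosed_Icc.inter (isClosed_singleton.preimage hg)).csSup_mem
    ⟨p, ⟨le_rfl, hbB.1.1⟩, hp⟩ hAb
  set a := sSup A
  obtain ⟨⟨hpa, hab⟩, hga : g a = u⟩ := haA
  obtain ⟨⟨-, hbq⟩, hgb : g b = v⟩ := hbB
  refine ⟨a, b, hpa, hab, hbq, Subset.antisymm ?_ ?_⟩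
  · rintro _ ⟨x, hx, rfl⟩
    refine ⟨not_lt.1 fun hxu => ?_, not_lt.1 fun hvx => ?_⟩
    · obtain ⟨c, hc, hgc⟩ := intermediate_value_Icc hx.2 hg.continuousOn ⟨hxu.le, hgb ▸ huv⟩
      have hca : c ≤ a := le_csSup hAb ⟨⟨hpa.trans (hx.1.trans hc.1), hc.2⟩, hgc⟩
      exact hxu.ne (show x = a by linarith [hc.1, hx.1] ▸ hga)
    · obtain ⟨c, hc, hgc⟩ := intermediate_value_Icc hx.1 hg.continuousOn ⟨hga ▸ huv, hvx.le⟩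
      have hbc : b ≤ c := csInf_le hBb ⟨⟨hpa.trans hc.1, hc.2.trans (hx.2.trans hbq)⟩, hgc⟩
      exact hvx.ne' (show x = b by linarith [hc.2, hx.2] ▸ hgb)
  · exact hga ▸ hgb ▸ intermediate_value_Icc hab hg.continuousOn

theorem exists_subset_Icc_image_eq (hg : Continuous g) {c d : ℝ} {A : Set ℝ}
    (hAc : IsCompact A) (hA : IsConnected A) (hAg : A ⊆ g '' Icc c d) :
    ∃ B ⊆ Icc c d, IsCompact B ∧ IsConnected B ∧ g '' B = A := by
  have hAeq := eq_Icc_of_connected_compact hA hAc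
  have hle : sInf A ≤ sSup A := csInf_le_csSup hA.nonempty hAc.bddBelow hAc.bddAbove
  obtain ⟨p, hp, hpu⟩ := hAg (hAc.sInf_mem hA.nonempty)
  obtain ⟨q, hq, hqv⟩ := hAg (hAc.sSup_mem hA.nonempty)
  rw [hAeq]
  rcases le_total p q with hpq | hqp
  · obtain ⟨a, b, hpa, hab, hbq, himg⟩ := exists_Icc_image_eq_Icc_of_le hg hpq hpu hqv hle
    exact ⟨Icc a b, Icc_subset_Icc (hp.1.trans hpa) (hbq.trans hq.2), isCompact_Icc,
      isConnected_Icc hab, himg⟩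
  · obtain ⟨a, b, hpa, hab, hbq, himg⟩ := exists_Icc_image_eq_Icc_of_le (g := g ∘ Neg.neg)
      (hg.comp continuous_neg) (neg_le_neg hqp) (by simpa using hpu) (by simpa using hqv) hle
    refine ⟨Icc (-b) (-a), Icc_subset_Icc (by linarith [hq.1]) (by linarith [hp.2]),
      isCompact_Icc, isConnected_Icc (neg_le_neg hab), ?_⟩
    rw [← image_neg_Icc, ← image_comp, himg]

theorem exists_seq_subset_Icc_image_eq (hg : Continuous g) {c d : ℝ}
    (hsurj : Icc c d ⊆ g '' Icc c d) {A : Set ℝ} (hAcd : A ⊆ Icc c d) (hAc : IsCompact A)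
    (hA : IsConnected A) :
    ∃ s : ℕ → Set ℝ, s 0 = A ∧ (∀ k, s k ⊆ Icc c d ∧ IsCompact (s k) ∧ IsConnected (s k)) ∧
      ∀ k, g '' s (k + 1) = s k := by
  have hlift (B : {B : Set ℝ // B ⊆ Icc c d ∧ IsCompact B ∧ IsConnected B}) :
      ∃ B' : {B : Set ℝ // B ⊆ Icc c d ∧ IsCompact B ∧ IsConnected B}, g '' B'.1 = B.1 := by
    obtain ⟨B', hB'⟩ := exists_subset_Icc_image_eq hg B.2.2.1 B.2.2.2 (B.2.1.trans hsurj)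
    exact ⟨⟨B', hB'.1, hB'.2.1, hB'.2.2.1⟩, hB'.2.2.2⟩
  choose L hL using hlift
  refine ⟨fun k => (L^[k] ⟨A, hAcd, hAc, hA⟩).1, rfl, fun k => (L^[k] _).2, fun k => ?_⟩
  simp only [Function.iterate_succ_apply']
  exact hL _

end IntervalLifting

section Arcs

variable {β : Type*} [ConditionallyCompleteLinearOrder β] [TopologicalSpace β] [OrderTopology β]
  [DenselyOrdered β]

theorem exists_Icc_subset_eventually_subset {C : Set β} {Cs : ℕ → Set β} (hCc : IsCompact C)
    (hC : IsConnected C) (hCnt : C.Nontrivial) (hCs : ∀ j, IsPreconnected (Cs j))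
    (happrox : ∀ z ∈ C, ∃ w : ℕ → β, (∀ j, w j ∈ Cs j) ∧ Tendsto w atTop (𝓝 z)) :
    ∃ c d, c < d ∧ Icc c d ⊆ C ∧ ∀ᶠ j in atTop, Icc c d ⊆ Cs j := by
  have hCeq := eq_Icc_of_connected_compact hC hCc
  have hlt : sInf C < sSup C :=
    (csInf_le_csSup hC.nonempty hCc.bddBelow hCc.bddAbove).lt_of_ne fun h =>
      hCnt.not_subsingleton (by rw [hCeq, h, Icc_self]; exact subsingleton_singleton)
  obtain ⟨c, hc, hcd⟩ := exists_between hlt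
  obtain ⟨d, hcd, hd⟩ := exists_between hcd
  obtain ⟨wa, hwa, hwa_lim⟩ := happrox _ (hCc.sInf_mem hC.nonempty)
  obtain ⟨wb, hwb, hwb_lim⟩ := happrox _ (hCc.sSup_mem hC.nonempty)
  refine ⟨c, d, hcd, by rw [hCeq]; exact Icc_subset_Icc hc.le hd.le, ?_⟩
  filter_upwards [hwa_lim.eventually_lt_const hc, hwb_lim.eventually_const_lt hd] with j ha hb
  exact (Icc_subset_Icc ha.le hb.le).trans ((hCs j).Icc_subset (hwa j) (hwb j))

theorem Topology.IsEmbedding.exists_subset_eventually_subset {Y : Type*} [TopologicalSpace Y]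
    {γ : β → Y} (hγ : IsEmbedding γ) {C : Set Y} {Cs : ℕ → Set Y} (hCγ : C ⊆ range γ)
    (hCsγ : ∀ j, Cs j ⊆ range γ) (hCc : IsCompact C) (hC : IsConnected C) (hCnt : C.Nontrivial)
    (hCs : ∀ j, IsPreconnected (Cs j))
    (happrox : ∀ z ∈ C, ∃ w : ℕ → Y, (∀ j, w j ∈ Cs j) ∧ Tendsto w atTop (𝓝 z)) :
    ∃ M, IsPreconnected M ∧ M.Nontrivial ∧ M ⊆ C ∧ ∀ᶠ j in atTop, M ⊆ Cs j := by
  have himg {s : Set Y} (hs : s ⊆ range γ) : γ '' (γ ⁻¹' s) = s := image_preimage_eq_of_subset hs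
  have hpre {s : Set Y} (hs : s ⊆ range γ) (h : IsPreconnected s) : IsPreconnected (γ ⁻¹' s) :=
    hγ.isInducing.isPreconnected_image.1 (by rwa [himg hs])
  obtain ⟨c, d, hcd, hcdC, hcdCs⟩ := exists_Icc_subset_eventually_subset
    (C := γ ⁻¹' C) (Cs := fun j => γ ⁻¹' Cs j) ((hγ.isInducing.isCompact_preimage_iff hCγ).2 hCc)
    ⟨Nonempty.of_image (by rw [himg hCγ]; exact hC.nonempty), hpre hCγ hC.isPreconnected⟩
    (nontrivial_of_image γ _ (by rwa [himg hCγ])) (fun j => hpre (hCsγ j) (hCs j)) fun z hz => by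
      obtain ⟨w, hw, hlim⟩ := happrox _ hz
      choose w' hw' using fun j => hCsγ j (hw j)
      refine ⟨w', fun j => by simp [hw', hw], ?_⟩
      rw [hγ.tendsto_nhds_iff, show γ ∘ w' = w from funext hw']
      exact hlim
  refine ⟨γ '' Icc c d, isPreconnected_Icc.image γ hγ.continuous.continuousOn,
    Nontrivial.image ⟨c, left_mem_Icc.2 hcd.le, d, right_mem_Icc.2 hcd.le, hcd.ne⟩ hγ.injective,
    image_subset_iff.2 hcdC, hcdCs.mono fun j h => image_subset_iff.2 h⟩

end Arcs

section Splitting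

variable {g : ℝ → ℝ}

theorem invLimit_congr {f : ℝ → ℝ} (h : EqOn f g (Icc 0 1)) : invLimit f = invLimit g := by
  ext x
  exact ⟨fun hx => ⟨hx.1, fun n => (h (hx.1 _)).symm.trans (hx.2 n)⟩,
    fun hx => ⟨hx.1, fun n => (h (hx.1 _)).trans (hx.2 n)⟩⟩

theorem IsSplittingSeq.congr {f : ℝ → ℝ} {l r : ℕ → ℝ} {N : Set ℕ} {S : ℕ → Set ℝ}
    (hs : IsSplittingSeq f l r N S) (h : EqOn f g (Icc 0 1)) : IsSplittingSeq g l r N S := by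
  obtain ⟨hlr, hT, hTne, hTimg, hnd, hN, hS⟩ := hs
  refine ⟨hlr, hT, hTne, fun n => (h.mono (hT _)).image_eq.symm.trans (hTimg n), hnd, hN,
    fun n hn => ?_⟩
  obtain ⟨hSI, hS01, hST, hSimg⟩ := hS n hn
  exact ⟨hSI, hS01, hST, (h.mono hS01).image_eq.symm.trans (hSimg.trans (h.mono (hT n)).image_eq)⟩

theorem threads_subset_invLimit {s : ℕ → Set ℝ} (hs : ∀ k, s k ⊆ Icc 0 1) :
    threads g s ⊆ invLimit g :=
  fun _ hx => ⟨fun k => hs k (hx.1 k), hx.2⟩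

theorem exists_seq_image_eq_extending (hg : Continuous g) (hsurj : g '' Icc 0 1 = Icc 0 1)
    {T : ℕ → Set ℝ} (hTimg : ∀ k, g '' T (k + 1) = T k)
    (hT : ∀ k, T k ⊆ Icc 0 1 ∧ IsCompact (T k) ∧ IsConnected (T k)) {n : ℕ} {S : Set ℝ}
    (hS01 : S ⊆ Icc 0 1) (hSc : IsCompact S) (hS : IsConnected S) (hSimg : g '' S = T n) :
    ∃ s : ℕ → Set ℝ, (∀ k, g '' s (k + 1) = s k) ∧
      (∀ k, s k ⊆ Icc 0 1 ∧ IsCompact (s k) ∧ IsConnected (s k)) ∧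
      (∀ k ≤ n, s k = T k) ∧ s (n + 1) = S := by
  obtain ⟨s, hs0, hs, hsimg⟩ := exists_seq_subset_Icc_image_eq hg hsurj.ge hS01 hSc hS
  let s' (k : ℕ) : Set ℝ := if k ≤ n then T k else s (k - (n + 1))
  have hlow k (hk : k ≤ n) : s' k = T k := if_pos hk
  have hhigh k (hk : n < k) : s' k = s (k - (n + 1)) := if_neg hk.not_ge
  refine ⟨s', fun k => ?_, fun k => ?_, hlow, by rw [hhigh _ n.lt_succ_self, Nat.sub_self, hs0]⟩
  · rcases lt_trichotomy k n with hk | rfl | hk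
    · rw [hlow _ hk, hlow _ hk.le, hTimg]
    · rw [hhigh _ k.lt_succ_self, hlow _ le_rfl, Nat.sub_self, hs0, hSimg]
    · rw [hhigh _ (by omega), hhigh _ hk, show k + 1 - (n + 1) = k - (n + 1) + 1 by omega,
        hsimg]
  · rcases le_or_gt k n with hk | hk
    · rw [hlow _ hk]; exact hT k
    · rw [hhigh _ hk]; exact hs _

variable {l r : ℕ → ℝ} {N : Set ℕ} {S : ℕ → Set ℝ}

theorem IsSplittingSeq.threads_subset_isCompact_isConnected_nontrivial (hg : Continuous g)
    (hs : IsSplittingSeq g l r N S) :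
    let C := threads g fun k => Icc (l k) (r k)
    C ⊆ invLimit g ∧ IsCompact C ∧ IsConnected C ∧ C.Nontrivial := by
  obtain ⟨hlr, hT01, -, hTimg, ⟨m, hm⟩, -⟩ := hs
  refine ⟨threads_subset_invLimit hT01, isCompact_threads hg fun _ => isCompact_Icc,
    isConnected_threads hg (fun _ => isCompact_Icc) (fun k => isConnected_Icc (hlr k)) hTimg,
    nontrivial_of_image (fun x => x (m + 1)) _ ?_⟩
  rw [image_apply_threads hTimg]
  exact ⟨_, left_mem_Icc.2 (hlr _), _, right_mem_Icc.2 (hlr _), (hm _ m.lt_succ_self).ne⟩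

theorem IsSplittingSeq.exists_subcontinuum (hg : Continuous g) (hsurj : g '' Icc 0 1 = Icc 0 1)
    (hs : IsSplittingSeq g l r N S) (j : ℕ) :
    let C := threads g fun k => Icc (l k) (r k)
    ∃ D ⊆ invLimit g, IsCompact D ∧ IsConnected D ∧ D.Nontrivial ∧ D ≠ C ∧
      (∀ x ∈ D, ∃ y ∈ C, ∀ k ≤ j, y k = x k) ∧ (∀ y ∈ C, ∃ x ∈ D, ∀ k ≤ j, x k = y k) ∧
      ∃ n ≥ j, ((fun x => x n) '' (C ∩ D)).Finite := by
  intro C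
  obtain ⟨hlr, hT01, -, hTimg, -, hN, hS⟩ := hs
  obtain ⟨p, hpN, hjp⟩ := hN.exists_gt j
  obtain ⟨n, rfl⟩ : ∃ n, p = n + 1 := ⟨p - 1, by omega⟩
  obtain ⟨⟨u, v, huv, hSuv⟩, hS01, hST, hSimg⟩ := hS _ hpN
  have hSnt : (S (n + 1)).Nontrivial :=
    hSuv ▸ ⟨u, left_mem_Icc.2 huv.le, v, right_mem_Icc.2 huv.le, huv.ne⟩
  have hSfin : (S (n + 1) ∩ Icc (l (n + 1)) (r (n + 1))).Finite := (toFinite _).subset hST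
  -- `D` follows the intervals `[l k, r k]` up to level `n`, then climbs through `S (n + 1)`
  obtain ⟨s, hsimg, hs, hsT, hsS⟩ := exists_seq_image_eq_extending hg hsurj
    (T := fun k => Icc (l k) (r k)) hTimg
    (fun k => ⟨hT01 k, isCompact_Icc, isConnected_Icc (hlr k)⟩) hS01 (hSuv ▸ isCompact_Icc)
    (hSuv ▸ isConnected_Icc huv.le) (hSimg.trans (hTimg n))
  have hD := image_apply_threads hsimg (n + 1)
  rw [hsS] at hD
  refine ⟨threads g s, threads_subset_invLimit fun k => (hs k).1,
    isCompact_threads hg fun k => (hs k).2.1,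
    isConnected_threads hg (fun k => (hs k).2.1) (fun k => (hs k).2.2) hsimg,
    nontrivial_of_image _ _ (hD ▸ hSnt), fun h => ?_, fun x hx => ?_, fun y hy => ?_, n + 1,
    by omega, hSfin.subset ?_⟩
  · have hST' : S (n + 1) = Icc (l (n + 1)) (r (n + 1)) := by
      rw [← hD, h, image_apply_threads hTimg]
    refine hSnt.not_subsingleton
      ((hsS ▸ (hs (n + 1)).2.2).isPreconnected.subsingleton_of_finite ?_)
    rwa [← hST', inter_self] at hSfin
  · obtain ⟨y, hy, hyx⟩ := exists_mem_threads_forall_le_eq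
      (s' := fun k => Icc (l k) (r k)) hTimg hx (by have := hx.1 n; rwa [hsT n le_rfl] at this)
    exact ⟨y, hy, fun k hk => hyx k (by omega)⟩
  · obtain ⟨x, hx, hxy⟩ := exists_mem_threads_forall_le_eq hsimg hy (n := n)
      (by rw [hsT n le_rfl]; exact hy.1 n)
    exact ⟨x, hx, fun k hk => hxy k (by omega)⟩
  · rintro _ ⟨x, ⟨hxC, hxD⟩, rfl⟩
    exact ⟨hsS ▸ hxD.1 (n + 1), hxC.1 (n + 1)⟩

end Splitting

theorem not_nonempty_homeomorph_Icc_of_subcontinua {g : ℝ → ℝ} {X C : Set (ℕ → ℝ)}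
    {Cs : ℕ → Set (ℕ → ℝ)} (hX : ∀ x ∈ X, ∀ k, g (x (k + 1)) = x k) (hCX : C ⊆ X)
    (hCsX : ∀ j, Cs j ⊆ X) (hCc : IsCompact C) (hC : IsConnected C) (hCnt : C.Nontrivial)
    (hCs : ∀ j, IsPreconnected (Cs j)) (happrox : ∀ j, ∀ y ∈ C, ∃ x ∈ Cs j, ∀ k ≤ j, x k = y k)
    (hfin : ∀ j, ∃ n ≥ j, ((fun x => x n) '' (C ∩ Cs j)).Finite) :
    ¬ Nonempty (X ≃ₜ Icc (0 : ℝ) 1) := by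
  rintro ⟨e⟩
  have hrange : range (Subtype.val ∘ e.symm) = X := by
    rw [range_comp, e.symm.range_coe, image_univ, Subtype.range_coe]
  obtain ⟨M, hM, hMnt, hMC, hMCs⟩ :=
    (IsEmbedding.subtypeVal.comp e.symm.isEmbedding).exists_subset_eventually_subset
      (hCX.trans hrange.ge) (fun j => (hCsX j).trans hrange.ge) hCc hC hCnt hCs fun z hz => by
        choose w hw hwz using fun j => happrox j z hz
        exact ⟨w, hw, tendsto_pi_of_forall_le_eq hwz⟩
  refine hMnt.not_subsingleton (.of_frequently_subsingleton_image_apply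
    (fun x hx => hX x (hCX (hMC hx))) fun k => ?_)
  obtain ⟨J, hJ⟩ := eventually_atTop.1 hMCs
  obtain ⟨n, hn, hfin⟩ := hfin (max J k)
  exact ⟨n, (le_max_right J k).trans hn,
    (hM.image _ (continuous_apply n).continuousOn).subsingleton_of_finite
      (hfin.subset (image_mono (subset_inter hMC (hJ _ (le_max_left J k)))))⟩

theorem stmt_19 (f : ℝ → ℝ) (hf : ContinuousOn f (Icc 0 1))
    (hsurj : f '' Icc 0 1 = Icc 0 1) (hsplit : SplittingSeq f) :
    (∃ (C : Set (ℕ → ℝ)) (Cs : ℕ → Set (ℕ → ℝ)),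
      C ⊆ invLimit f ∧ IsCompact C ∧ IsConnected C ∧ C.Nontrivial ∧
      (∀ n, Cs n ⊆ invLimit f ∧ IsCompact (Cs n) ∧ IsConnected (Cs n) ∧
        (Cs n).Nontrivial ∧ Cs n ≠ C) ∧
      Tendsto (fun n => seqHausdorffDist (Cs n) C) atTop (𝓝 0)) ∧
    ¬ Nonempty ((invLimit f) ≃ₜ (Icc (0:ℝ) 1)) := by
  obtain ⟨g, hg, hfg⟩ : ∃ g, Continuous g ∧ EqOn f g (Icc 0 1) :=
    ⟨IccExtend zero_le_one ((Icc 0 1).domRestrict f), hf.domRestrict.Icc_extend',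
      fun x hx => (IccExtend_of_mem zero_le_one ((Icc 0 1).domRestrict f) hx).symm⟩
  obtain ⟨l, r, N, S, hs⟩ := hsplit
  replace hs := hs.congr hfg
  rw [hfg.image_eq] at hsurj
  rw [invLimit_congr hfg]
  obtain ⟨hCX, hCc, hC, hCnt⟩ := hs.threads_subset_isCompact_isConnected_nontrivial hg
  choose Cs hCsX hCsc hCs hCsnt hCsC hCsC' hCCs hfin using hs.exists_subcontinuum hg hsurj
  exact ⟨⟨_, Cs, hCX, hCc, hC, hCnt, fun j => ⟨hCsX j, hCsc j, hCs j, hCsnt j, hCsC j⟩,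
    tendsto_seqHausdorffDist_of_forall_le_eq hCsC' hCCs⟩,
    not_nonempty_homeomorph_Icc_of_subcontinua (fun x hx => hx.2) hCX hCsX hCc hC hCnt
      (fun j => (hCs j).isPreconnected) hCCs hfin⟩
end
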